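/- Av(213)𝒜 = Av(2143). -/

import Mathlib

/-- A permutation of length `n` (a bijection of `{0, …, n-1}`, identified with the
sequence of its values), packaged with its length. -/
abbrev PermSig : Type := Σ n : ℕ, Equiv.Perm (Fin n)

/-- Pattern containment: the permutation `α` of length `k` is contained in the
permutation `τ` of length `n` if there is an increasing choice of positions on which
`τ` is order-isomorphic to `α`. -/
def Contains {k n : ℕ} (α : Equiv.Perm (Fin k)) (τ : Equiv.Perm (Fin n)) : Prop :=
  ∃ f : Fin k ↪o Fin n, ∀ i j : Fin k, α i < α j ↔ τ (f i) < τ (f j)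

/-- The avoidance class `Av B`: all permutations containing no member of `B`. -/
def Av (B : Set PermSig) : Set PermSig :=
  {τ : PermSig | ∀ β ∈ B, ¬ Contains β.2 τ.2}

/-- A pattern class: a set of permutations downward closed under pattern containment. -/
def IsPatternClass (C : Set PermSig) : Prop :=
  ∀ (k n : ℕ) (α : Equiv.Perm (Fin k)) (τ : Equiv.Perm (Fin n)),
    Contains α τ → (⟨n, τ⟩ : PermSig) ∈ C → (⟨k, α⟩ : PermSig) ∈ C

/-- The base relation of the poset `P(τ)` on values: `x ≺ y` whenever `x` appears
before `y` in `τ` and either `x > y`, or some value `z` appears between `x` and `y`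
in `τ` with `x < y < z`. -/
def PQBase {n : ℕ} (τ : Equiv.Perm (Fin n)) (x y : Fin n) : Prop :=
  τ.symm x < τ.symm y ∧
    (y < x ∨ ∃ z : Fin n, τ.symm x < τ.symm z ∧ τ.symm z < τ.symm y ∧ x < y ∧ y < z)

/-- The poset `P(τ)`: the transitive closure of the base relation. -/
def PQ {n : ℕ} (τ : Equiv.Perm (Fin n)) : Fin n → Fin n → Prop :=
  Relation.TransGen (PQBase τ)

/-- `σ` is a linear extension of `P(τ)`; equivalently, `(σ, τ)` is an allowable pair,
i.e. a priority queue can produce output `τ` from input `σ`. -/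
def Allowable {n : ℕ} (σ τ : Equiv.Perm (Fin n)) : Prop :=
  ∀ x y : Fin n, PQ τ x y → σ.symm x < σ.symm y

/-- `C𝒜`: the set of permutations obtainable by a priority queue from an input in `C`. -/
def ImageA (C : Set PermSig) : Set PermSig :=
  {τ : PermSig | ∃ σ : Equiv.Perm (Fin τ.1), (⟨τ.1, σ⟩ : PermSig) ∈ C ∧ Allowable σ τ.2}

/-- The pattern `213` (written 0-indexed). -/
noncomputable def p213 : Equiv.Perm (Fin 3) :=
  Equiv.ofBijective (![1, 0, 2] : Fin 3 → Fin 3) (by decide)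

/-- The pattern `2143` (written 0-indexed). -/
noncomputable def p2143 : Equiv.Perm (Fin 4) :=
  Equiv.ofBijective (![1, 0, 3, 2] : Fin 4 → Fin 4) (by decide)

/-!
If `τ` contains `2143` as `b a d c` with `a < b < c < d`, then `b ≺ a` (a descent) and `a ≺ c`
(witnessed by `d`) in `P(τ)`, so every linear extension of `P(τ)` contains the `213` `b a c`.

Conversely, if `τ` avoids `2143`, output the first entry `m` of `τ`, then recursively the entries
above `m`, then recursively those below `m` (`pivotSort`, applied to the word of `τ`). The result
visibly avoids `213`. It is a linear extension of `P(τ)`: the only pair it could put in the wrong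
order is `x < m < y` with `x ≺ y`; but then some `z > y` lies between `x` and `y` in `τ`, and
`m x z y` is a `2143`.
-/

open Equiv List

theorem List.not_pair_sublist_append {α : Type*} {x y : α} {A B : List α} (hx : x ∉ A)
    (hy : y ∉ B) : ¬ [x, y] <+ A ++ B := by
  intro h
  obtain ⟨l₁, l₂, heq, h₁, h₂⟩ := sublist_append_iff.1 h
  rcases l₁ with _ | ⟨u, _ | ⟨v, l₁⟩⟩
  · rw [nil_append] at heq
    exact hy (h₂.subset (by simp [← heq]))
  · simp only [cons_append, nil_append, cons.injEq] at heq
    exact hx (h₁.subset (by simp [heq.1]))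
  · simp only [cons_append, cons.injEq] at heq
    exact hx (h₁.subset (by simp [heq.1]))

theorem List.triple_sublist_ofFn {α : Type*} {n : ℕ} (f : Fin n → α) {i j k : Fin n}
    (hij : i < j) (hjk : j < k) : [f i, f j, f k] <+ ofFn f := by
  simpa using map_getElem_sublist (l := ofFn f) (is := [i, j, k].map (Fin.cast length_ofFn.symm))
    (by simp [hij, hjk, hij.trans hjk])

section PivotSort

variable {α : Type*} [LinearOrder α]

def pivotSort : List α → List α
  | [] => []
  | m :: l => m :: (pivotSort (l.filter (m < ·)) ++ pivotSort (l.filter (· < m)))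
termination_by l => l.length
decreasing_by all_goals simpa [Nat.lt_succ_iff] using length_filter_le _ l.attach

@[simp]
theorem pivotSort_nil : pivotSort ([] : List α) = [] := by
  rw [pivotSort]

theorem pivotSort_cons (m : α) (l : List α) :
    pivotSort (m :: l) = m :: (pivotSort (l.filter (m < ·)) ++ pivotSort (l.filter (· < m))) := by
  rw [pivotSort]

@[elab_as_elim]
theorem pivotSort_induction {motive : List α → Prop} (nil : motive [])
    (cons : ∀ m l, motive (l.filter (m < ·)) → motive (l.filter (· < m)) → motive (m :: l)) :
    ∀ l, motive l
  | [] => nil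
  | m :: l => cons m l (pivotSort_induction nil cons _) (pivotSort_induction nil cons _)
termination_by l => l.length
decreasing_by all_goals exact Nat.lt_succ_of_le (length_filter_le _ _)

@[simp]
theorem mem_pivotSort {x : α} {l : List α} : x ∈ pivotSort l ↔ x ∈ l := by
  induction l using pivotSort_induction with
  | nil => simp
  | cons m l ihA ihB =>
    simp only [pivotSort_cons, mem_cons, mem_append, ihA, ihB, mem_filter, decide_eq_true_eq]
    rcases lt_trichotomy x m with h | rfl | h
    · simp [h, h.ne, not_lt_of_gt]
    · simp
    · simp [h, h.ne', not_lt_of_gt]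

theorem nodup_pivotSort (l : List α) : (pivotSort l).Nodup := by
  induction l using pivotSort_induction with
  | nil => simp
  | cons m l ihA ihB =>
    rw [pivotSort_cons, nodup_cons, nodup_append]
    refine ⟨by simp, ihA, ihB, ?_⟩
    simp only [mem_pivotSort, mem_filter, decide_eq_true_eq]
    exact fun a ha b hb => (hb.2.trans ha.2).ne'

theorem not_sublist_pivotSort {a b c : α} (hab : a < b) (hbc : b < c) (l : List α) :
    ¬ [b, a, c] <+ pivotSort l := by
  induction l using pivotSort_induction with
  | nil => simp
  | cons m l ihA ihB =>
    set A := pivotSort (l.filter (m < ·))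
    set B := pivotSort (l.filter (· < m))
    have hA {u : α} (hu : u ≤ m) : u ∉ A := by simp [A, hu]
    have hB {u : α} (hu : m ≤ u) : u ∉ B := by simp [B, hu]
    have hbc' : [b, c] <+ [b, a, c] := .cons_cons _ (.cons _ (.refl _))
    have hac' : [a, c] <+ [b, a, c] := .cons _ (.refl _)
    rw [pivotSort_cons]
    intro h
    cases h with
    | cons_cons _ h => exact not_pair_sublist_append (hA hab.le) (hB hbc.le) h
    | cons _ h =>
      rcases le_or_gt b m with hbm | hmb
      · rcases le_or_gt c m with hcm | hmc
        · refine ihB (h.of_sublist_append_right ?_)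
          simp only [mem_cons, not_mem_nil, or_false, forall_eq_or_imp, forall_eq]
          exact ⟨hA hbm, hA (hab.le.trans hbm), hA hcm⟩
        · exact not_pair_sublist_append (hA hbm) (hB hmc.le) (hbc'.trans h)
      · rcases le_or_gt a m with ham | hma
        · exact not_pair_sublist_append (hA ham) (hB (hmb.trans hbc).le) (hac'.trans h)
        · refine ihA (h.of_sublist_append_left ?_)
          simp only [mem_cons, not_mem_nil, or_false, forall_eq_or_imp, forall_eq]
          exact ⟨hB hmb.le, hB hma.le, hB (hmb.trans hbc).le⟩

end PivotSort

theorem exists_perm_ofFn_eq {n : ℕ} {L : List (Fin n)} (hnd : L.Nodup) (hmem : ∀ x, x ∈ L) :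
    ∃ σ : Perm (Fin n), ofFn σ = L := by
  have hlen : L.length = n := by
    simpa using Fintype.card_congr (hnd.getEquivOfForallMemList L hmem)
  refine ⟨(finCongr hlen.symm).trans (hnd.getEquivOfForallMemList L hmem), ?_⟩
  exact ext_get (by simp [hlen]) fun i _ _ => by simp

theorem Equiv.Perm.symm_lt_symm_of_pair_sublist_ofFn {n : ℕ} {σ : Perm (Fin n)} {x y : Fin n}
    (h : [x, y] <+ ofFn σ) : σ.symm x < σ.symm y :=
  (pairwise_ofFn (R := (σ.symm · < σ.symm ·)).2 fun i j hij => by simpa using hij).forall_sublist h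

section Patterns

variable {n : ℕ}

theorem contains_iff_strictMono {k : ℕ} (α : Perm (Fin k)) (τ : Perm (Fin n)) :
    Contains α τ ↔ ∃ f : Fin k ↪o Fin n, StrictMono (τ ∘ f ∘ α.symm) := by
  refine exists_congr fun f => ⟨fun h a b hab => ?_, fun h i j => ?_⟩
  · simpa using (h (α.symm a) (α.symm b)).1 (by simpa using hab)
  · simpa using (h.lt_iff_lt (a := α i) (b := α j)).symm

theorem contains_p213_iff (σ : Perm (Fin n)) :
    Contains p213 σ ↔ ∃ i j k, i < j ∧ j < k ∧ σ j < σ i ∧ σ i < σ k := by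
  have hs : p213.symm 0 = 1 ∧ p213.symm 1 = 0 ∧ p213.symm 2 = 2 := by
    simp [symm_apply_eq, p213]
  simp only [contains_iff_strictMono, Fin.strictMono_iff_lt_succ, Fin.forall_fin_two]
  constructor
  · rintro ⟨f, h₁, h₂⟩
    refine ⟨f 0, f 1, f 2, f.strictMono (by decide), f.strictMono (by decide), ?_, ?_⟩
    · simpa [hs] using h₁
    · simpa [hs] using h₂
  · rintro ⟨i, j, k, hij, hjk, h₁, h₂⟩
    refine ⟨OrderEmbedding.ofStrictMono ![i, j, k] ?_, ?_, ?_⟩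
    · simp [Fin.strictMono_iff_lt_succ, Fin.forall_fin_two, hij, hjk]
    · simpa [hs] using h₁
    · simpa [hs] using h₂

theorem contains_p2143_iff (τ : Perm (Fin n)) :
    Contains p2143 τ ↔ ∃ i j k l, i < j ∧ j < k ∧ k < l ∧ τ j < τ i ∧ τ i < τ l ∧ τ l < τ k := by
  have hs : p2143.symm 0 = 1 ∧ p2143.symm 1 = 0 ∧ p2143.symm 2 = 3 ∧ p2143.symm 3 = 2 := by
    simp [symm_apply_eq, p2143]
  simp only [contains_iff_strictMono, Fin.strictMono_iff_lt_succ, Fin.forall_fin_succ,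
    IsEmpty.forall_iff, and_true]
  constructor
  · rintro ⟨f, h₁, h₂, h₃⟩
    refine ⟨f 0, f 1, f 2, f 3, f.strictMono (by decide), f.strictMono (by decide),
      f.strictMono (by decide), ?_, ?_, ?_⟩
    · simpa [hs] using h₁
    · simpa [hs] using h₂
    · simpa [hs] using h₃
  · rintro ⟨i, j, k, l, hij, hjk, hkl, h₁, h₂, h₃⟩
    refine ⟨OrderEmbedding.ofStrictMono ![i, j, k, l] ?_, ?_, ?_, ?_⟩
    · simp [Fin.strictMono_iff_lt_succ, Fin.forall_fin_succ, hij, hjk, hkl]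
    · simpa [hs] using h₁
    · simpa [hs] using h₂
    · simpa [hs] using h₃

end Patterns

namespace PQ

variable {n : ℕ} {τ : Perm (Fin n)} {x y : Fin n}

theorem symm_lt_symm (h : PQ τ x y) : τ.symm x < τ.symm y := by
  induction h with
  | single h => exact h.1
  | tail _ h ih => exact ih.trans h.1

theorem exists_gt_between (h : PQ τ x y) (hxy : x < y) :
    ∃ z, τ.symm x < τ.symm z ∧ τ.symm z < τ.symm y ∧ y < z := by
  induction h with
  | single h =>
    obtain ⟨-, hyx | ⟨z, hxz, hzy, -, hyz⟩⟩ := h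
    · exact absurd hxy hyx.not_gt
    · exact ⟨z, hxz, hzy, hyz⟩
  | tail hxw h ih =>
    obtain ⟨hwy, hyw | ⟨z, hwz, hzy, -, hyz⟩⟩ := h
    · obtain ⟨z, hxz, hzw, hwz⟩ := ih (hxy.trans hyw)
      exact ⟨z, hxz, hzw.trans hwy, hyw.trans hwz⟩
    · exact ⟨z, (symm_lt_symm hxw).trans hwz, hzy, hyz⟩

end PQ

theorem Allowable.contains_p213 {n : ℕ} {σ τ : Perm (Fin n)} (hall : Allowable σ τ)
    (h : Contains p2143 τ) : Contains p213 σ := by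
  obtain ⟨i, j, k, l, hij, hjk, hkl, h₁, h₂, h₃⟩ := (contains_p2143_iff τ).1 h
  have hdescent : PQ τ (τ i) (τ j) := .single ⟨by simpa using hij, .inl h₁⟩
  have hjump : PQ τ (τ j) (τ l) :=
    .single ⟨by simpa using hjk.trans hkl, .inr ⟨τ k, by simpa, by simpa, h₁.trans h₂, h₃⟩⟩
  exact (contains_p213_iff σ).2
    ⟨_, _, _, hall _ _ hdescent, hall _ _ hjump, by simpa using h₁, by simpa using h₂⟩

theorem pair_sublist_pivotSort {n : ℕ} {τ : Perm (Fin n)} (hτ : ¬ Contains p2143 τ)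
    {l : List (Fin n)} (hl : l.Pairwise (τ.symm · < τ.symm ·)) {x y : Fin n} (hx : x ∈ l)
    (hy : y ∈ l) (hxy : PQ τ x y) : [x, y] <+ pivotSort l := by
  induction l using pivotSort_induction generalizing x y with
  | nil => simp at hx
  | cons m l ihA ihB =>
    obtain ⟨hm, hl⟩ := pairwise_cons.1 hl
    have hym : y ≠ m := by
      rintro rfl
      rcases mem_cons.1 hx with rfl | hx
      · exact lt_irrefl _ hxy.symm_lt_symm
      · exact (hm x hx).not_gt hxy.symm_lt_symm
    have hyl : y ∈ l := (mem_cons.1 hy).resolve_left hym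
    rw [pivotSort_cons]
    rcases eq_or_ne x m with rfl | hxm
    · refine (singleton_sublist.2 ?_).cons_cons _
      rcases lt_or_gt_of_ne hym with h | h <;> simp [hyl, h]
    have hxl : x ∈ l := (mem_cons.1 hx).resolve_left hxm
    refine .cons _ ?_
    rcases lt_or_gt_of_ne hxm with hxm | hmx <;> rcases lt_or_gt_of_ne hym with hym | hmy
    · exact (ihB (hl.sublist filter_sublist) (by simp [hxl, hxm]) (by simp [hyl, hym]) hxy).trans
        (sublist_append_right _ _)
    · obtain ⟨z, hxz, hzy, hyz⟩ := hxy.exists_gt_between (hxm.trans hmy)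
      exact absurd ((contains_p2143_iff τ).2 ⟨τ.symm m, τ.symm x, τ.symm z, τ.symm y, hm x hxl,
        hxz, hzy, by simpa, by simpa, by simpa⟩) hτ
    · exact (singleton_sublist.2 (by simp [hxl, hmx])).append
        (singleton_sublist.2 (by simp [hyl, hym]))
    · exact (ihA (hl.sublist filter_sublist) (by simp [hxl, hmx]) (by simp [hyl, hmy]) hxy).trans
        (sublist_append_left _ _)

theorem not_contains_p213_of_ofFn_eq_pivotSort {n : ℕ} {σ : Perm (Fin n)} {l : List (Fin n)}
    (h : ofFn σ = pivotSort l) : ¬ Contains p213 σ := by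
  intro hσ
  obtain ⟨i, j, k, hij, hjk, h₁, h₂⟩ := (contains_p213_iff σ).1 hσ
  exact not_sublist_pivotSort h₁ h₂ l (h ▸ triple_sublist_ofFn σ hij hjk)

theorem imageA_av213 :
    ImageA (Av {(⟨3, p213⟩ : PermSig)}) = Av {(⟨4, p2143⟩ : PermSig)} := by
  ext ⟨n, τ⟩
  simp only [ImageA, Av, Set.mem_ofPred_eq, Set.mem_singleton_iff, forall_eq]
  constructor
  · rintro ⟨σ, hσ, hall⟩ hτ
    exact hσ (hall.contains_p213 hτ)
  · intro hτ
    have hmem (x : Fin n) : x ∈ ofFn τ := mem_ofFn.2 (τ.surjective x)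
    obtain ⟨σ, hσ⟩ := exists_perm_ofFn_eq (nodup_pivotSort (ofFn τ)) (by simpa using hmem)
    refine ⟨σ, not_contains_p213_of_ofFn_eq_pivotSort hσ, fun x y hxy => ?_⟩
    have hsorted : (ofFn τ).Pairwise (τ.symm · < τ.symm ·) :=
      pairwise_ofFn.2 fun i j hij => by simpa using hij
    exact Perm.symm_lt_symm_of_pair_sublist_ofFn
      (hσ ▸ pair_sublist_pivotSort hτ hsorted (hmem x) (hmem y) hxy)
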